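/- arXiv:2511.00603 — 3 statements merged into one kernel-verified Lean document; each statement's English description precedes it below -/
import Mathlib

section
/- Let X be a finite set, let P ≥ 1 be a natural number, and let M_1, …, M_P be matroids with ground set X. Let 𝓕 be the family of subsets of X that are independent in every M_p, and let f be a nondecreasing submodular function on subsets of X. Suppose S ∈ 𝓕 admits an enumeration s_1, …, s_K of its elements (with prefixes S_0 = ∅ and S_k = {s_1, …, s_k}) satisfying the greedy property: for every k ∈ {1, …, K} and every j ∈ X \ S_{k-1} with S_{k-1} ∪ {j} ∈ 𝓕, one has f(S_{k-1} ∪ {j}) − f(S_{k-1}) ≤ f(S_k) − f(S_{k-1}); and suppose S is maximal in 𝓕, i.e., S ∪ {j} ∉ 𝓕 for every j ∈ X \ S. Then for every T ∈ 𝓕, f(T) − f(S) ≤ P · (f(S) − f(∅)); equivalently, writing Φ for the maximum of f over 𝓕 and Φ^G = f(S), one has (Φ − Φ^G) ≤ (P/(P+1)) · (Φ − f(∅)). -/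
/-!
The greedy gains `ρ k = f (S (k+1)) - f (S k)` are nonnegative and, by submodularity and the greedy
choice, nonincreasing. Charge each `j ∈ T \ S` to the last step `κ j` at which it could still be
added to the greedy prefix: by submodularity its gain at `S` is at most `ρ (κ j)`. An element of `T`
that cannot be added to `S k` lies in the closure of `S k` in some `M p`, and the independent set
`T` meets that closure in at most `k` elements; so at most `P k` elements have `κ j < k`, and Abel
summation bounds `∑ ρ (κ j)` by `P ∑ ρ k = P (f S - f ∅)`.
-/

open Finset

theorem Nat.exists_lt_and_not_succ_of_zero {p : ℕ → Prop} {n : ℕ} (h0 : p 0) (hn : ¬ p n) :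
    ∃ k < n, p k ∧ ¬ p (k + 1) := by
  induction n with
  | zero => exact absurd h0 hn
  | succ n ih =>
    by_cases hpn : p n
    · exact ⟨n, n.lt_succ_self, hpn, hn⟩
    · obtain ⟨k, hk, hpk⟩ := ih hpn
      exact ⟨k, hk.trans n.lt_succ_self, hpk⟩

theorem sum_comp_le_mul_sum_range_of_card_lt_le {ι : Type*} (P : ℕ) {K : ℕ} {D : Finset ι}
    {κ : ι → ℕ} {ρ : ℕ → ℝ} (hκ : ∀ j ∈ D, κ j < K) (hcard : ∀ k ≤ K, #{j ∈ D | κ j < k} ≤ P * k)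
    (hρ : ∀ k < K, 0 ≤ ρ k) (hanti : AntitoneOn ρ (Set.Iio K)) :
    ∑ j ∈ D, ρ (κ j) ≤ P * ∑ k ∈ range K, ρ k := by
  induction K generalizing D ρ with
  | zero => simp [eq_empty_of_forall_notMem fun j hj => Nat.not_lt_zero _ (hκ j hj)]
  | succ K ih =>
    have hρK : ∀ k < K + 1, ρ K ≤ ρ k := fun k hk =>
      hanti (Set.mem_Iio.2 hk) (Set.mem_Iio.2 K.lt_succ_self) (Nat.lt_succ_iff.1 hk)
    -- Lowering `ρ` by `ρ K` kills the terms with `κ j = K` and leaves an instance of size `K`.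
    have hlower := ih (D := {j ∈ D | κ j < K}) (ρ := fun k => ρ k - ρ K)
      (fun j hj => (mem_filter.1 hj).2)
      (fun k hk => by
        rw [filter_filter, filter_congr fun j _ => and_iff_right_of_imp fun h => h.trans_le hk]
        exact hcard k (by omega))
      (fun k hk => sub_nonneg.2 (hρK k (by omega)))
      (fun a ha b hb hab => sub_le_sub_right (hanti.mono (Set.Iio_subset_Iio K.le_succ) ha hb hab) _)
    have hsplit : ∑ j ∈ D, ρ (κ j) = ∑ j ∈ D with κ j < K, (ρ (κ j) - ρ K) + #D * ρ K := by
      rw [sum_filter_of_ne fun j hj hne => ?_]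
      · simp [sum_sub_distrib]
      · exact lt_of_le_of_ne (Nat.lt_succ_iff.1 (hκ j hj)) fun h => hne (by rw [h, sub_self])
    have hD : (#D : ℝ) ≤ P * (K + 1) := by
      exact_mod_cast filter_true_of_mem hκ ▸ hcard (K + 1) le_rfl
    have hrange : ∑ k ∈ range K, (ρ k - ρ K) = ∑ k ∈ range K, ρ k - K * ρ K := by
      simp [sum_sub_distrib]
    rw [hsplit, sum_range_succ]
    nlinarith [hρ K K.lt_succ_self]

section SetFunction

variable {α : Type*} [DecidableEq α]

def IsSubmodular (f : Finset α → ℝ) : Prop :=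
  ∀ A B : Finset α, A ⊆ B → ∀ x ∉ B, f (insert x B) - f B ≤ f (insert x A) - f A

variable {f : Finset α → ℝ}

theorem sub_le_sum_marginal (hmono : Monotone f) (hsub : IsSubmodular f) (S T : Finset α) :
    f T - f S ≤ ∑ j ∈ T \ S, (f (insert j S) - f S) := by
  suffices h : ∀ D, f (S ∪ D) - f S ≤ ∑ j ∈ D, (f (insert j S) - f S) by
    have hT := h (T \ S)
    rw [union_sdiff_self_eq_union] at hT
    linarith [hmono (subset_union_right : T ⊆ S ∪ T)]
  intro D
  induction D using Finset.induction_on with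
  | empty => simp
  | insert a D ha ih =>
    rw [sum_insert ha, union_insert]
    by_cases haD : a ∈ S ∪ D
    · rw [insert_eq_of_mem haD]
      linarith [hmono (subset_insert a S)]
    · linarith [hsub S (S ∪ D) subset_union_left a haD]

theorem marginal_le_of_greedy (hmono : Monotone f) (hsub : IsSubmodular f) {A B C : Finset α}
    {x : α} (hAB : A ⊆ B) (hAC : A ⊆ C) (hx : x ∉ A → f (insert x A) - f A ≤ f B - f A) :
    f (insert x C) - f C ≤ f B - f A := by
  by_cases hxC : x ∈ C
  · rw [insert_eq_of_mem hxC, sub_self]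
    exact sub_nonneg.2 (hmono hAB)
  · exact (hsub A C hAC x hxC).trans (hx fun hxA => hxC (hAC hxA))

theorem monotone_of_forall_eq_insert {S : ℕ → Finset α} {s : ℕ → α}
    (hS : ∀ k, S (k + 1) = insert (s k) (S k)) : Monotone S :=
  monotone_nat_of_le_succ fun k => (hS k).symm ▸ subset_insert _ _

section Greedy

variable {F : Finset α → Prop} {S : ℕ → Finset α} {s : ℕ → α} {K : ℕ}

theorem antitoneOn_greedy_gain (hmono : Monotone f) (hsub : IsSubmodular f)
    (hdown : ∀ ⦃A B⦄, A ⊆ B → F B → F A) (hS : ∀ k, S (k + 1) = insert (s k) (S k))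
    (hSK : F (S K))
    (hgreedy : ∀ k < K, ∀ j ∉ S k, F (insert j (S k)) →
      f (insert j (S k)) - f (S k) ≤ f (S (k + 1)) - f (S k)) :
    AntitoneOn (fun k => f (S (k + 1)) - f (S k)) (Set.Iio K) := by
  have hchain := monotone_of_forall_eq_insert hS
  refine antitoneOn_of_succ_le Set.ordConnected_Iio fun k _ _ hk => ?_
  simp only [Order.succ_eq_add_one, Set.mem_Iio] at hk ⊢
  have hadd : F (insert (s (k + 1)) (S k)) := by
    refine hdown (insert_subset ?_ (hchain (by omega))) hSK
    exact hchain (show k + 2 ≤ K by omega) (hS (k + 1) ▸ mem_insert_self _ _)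
  rw [hS (k + 1)]
  exact marginal_le_of_greedy hmono hsub (hchain k.le_succ) (hchain k.le_succ)
    fun hsk => hgreedy k (by omega) _ hsk hadd

theorem greedy_sub_le_mul_of_card_blocked_le (P : ℕ) (hmono : Monotone f) (hsub : IsSubmodular f)
    (hdown : ∀ ⦃A B⦄, A ⊆ B → F B → F A) (hS0 : S 0 = ∅)
    (hS : ∀ k, S (k + 1) = insert (s k) (S k)) (hSK : F (S K))
    (hgreedy : ∀ k < K, ∀ j ∉ S k, F (insert j (S k)) →
      f (insert j (S k)) - f (S k) ≤ f (S (k + 1)) - f (S k))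
    (hmax : ∀ j ∉ S K, ¬ F (insert j (S K))) {T : Finset α} (hT : F T)
    (hblocked : ∀ k ≤ K, ∀ B ⊆ T, (∀ j ∈ B, ¬ F (insert j (S k))) → #B ≤ P * k) :
    f T - f (S K) ≤ P * (f (S K) - f ∅) := by
  have hchain := monotone_of_forall_eq_insert hS
  have hexit : ∀ j, ∃ k, j ∈ T \ S K →
      k < K ∧ F (insert j (S k)) ∧ ¬ F (insert j (S (k + 1))) := by
    intro j
    by_cases hj : j ∈ T \ S K
    · obtain ⟨hjT, hjS⟩ := mem_sdiff.1 hj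
      have hj0 : F (insert j (S 0)) := hdown (by simpa [hS0] using hjT) hT
      obtain ⟨k, hk⟩ := Nat.exists_lt_and_not_succ_of_zero (p := fun k => F (insert j (S k))) hj0
        (hmax j hjS)
      exact ⟨k, fun _ => hk⟩
    · exact ⟨0, fun h => absurd h hj⟩
  choose κ hκ using hexit
  have hcard : ∀ k ≤ K, #{j ∈ T \ S K | κ j < k} ≤ P * k := fun k hk =>
    hblocked k hk _ (filter_subset _ _ |>.trans sdiff_subset) fun j hj hadd => by
      obtain ⟨hj, hjk⟩ := mem_filter.1 hj
      exact (hκ j hj).2.2 (hdown (insert_subset_insert _ (hchain hjk)) hadd)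
  calc f T - f (S K) ≤ ∑ j ∈ T \ S K, (f (insert j (S K)) - f (S K)) :=
        sub_le_sum_marginal hmono hsub _ _
    _ ≤ ∑ j ∈ T \ S K, (f (S (κ j + 1)) - f (S (κ j))) := sum_le_sum fun j hj => by
        obtain ⟨hk, hadd, -⟩ := hκ j hj
        exact marginal_le_of_greedy hmono hsub (hchain (κ j).le_succ) (hchain hk.le)
          fun hjS => hgreedy _ hk j hjS hadd
    _ ≤ P * ∑ k ∈ range K, (f (S (k + 1)) - f (S k)) :=
        sum_comp_le_mul_sum_range_of_card_lt_le P (fun j hj => (hκ j hj).1) hcard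
          (fun k _ => sub_nonneg.2 (hmono (hchain k.le_succ)))
          (antitoneOn_greedy_gain hmono hsub hdown hS hSK hgreedy)
    _ = P * (f (S K) - f ∅) := by rw [sum_range_sub (fun k => f (S k)), hS0]

end Greedy

end SetFunction

theorem Matroid.Indep.encard_le_of_subset_closure {α : Type*} {M : Matroid α} {I X : Set α}
    (hI : M.Indep I) (hIX : I ⊆ M.closure X) : I.encard ≤ X.encard :=
  (hI.encard_le_eRk_of_subset hIX).trans ((M.eRk_closure_eq X).trans_le (M.eRk_le_encard X))

theorem card_le_mul_card_of_not_indep_insert {α ι : Type*} [DecidableEq α] [Fintype ι]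
    (M : ι → Matroid α) {S B : Finset α} (hS : ∀ i, (M i).Indep ↑S) (hB : ∀ i, (M i).Indep ↑B)
    (hblocked : ∀ j ∈ B, ¬ ∀ i, (M i).Indep ↑(insert j S)) :
    #B ≤ Fintype.card ι * #S := by
  classical
  have hcover : B ⊆ univ.biUnion fun i => {j ∈ B | j ∈ (M i).closure ↑S} := by
    intro j hj
    obtain ⟨i, hi⟩ := not_forall.1 (hblocked j hj)
    have hjE : j ∈ (M i).E := (hB i).subset_ground (mem_coe.2 hj)
    rw [coe_insert] at hi
    exact mem_biUnion.2 ⟨i, mem_univ i,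
      mem_filter.2 ⟨hj, (hS i).mem_closure_iff'.2 ⟨hjE, fun h => absurd h hi⟩⟩⟩
  have hpiece : ∀ i, #{j ∈ B | j ∈ (M i).closure ↑S} ≤ #S := fun i => by
    have hind := (hB i).subset (coe_subset.2 (filter_subset (· ∈ (M i).closure ↑S) B))
    have hcl : (↑{j ∈ B | j ∈ (M i).closure ↑S} : Set α) ⊆ (M i).closure ↑S := fun j hj =>
      (mem_filter.1 (mem_coe.1 hj)).2
    exact_mod_cast (Set.encard_coe_eq_coe_finsetCard _).symm.trans_le
      ((hind.encard_le_of_subset_closure hcl).trans_eq (Set.encard_coe_eq_coe_finsetCard S))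
  calc #B ≤ ∑ i, #{j ∈ B | j ∈ (M i).closure ↑S} := (card_le_card hcover).trans card_biUnion_le
    _ ≤ ∑ _i : ι, #S := sum_le_sum fun i _ => hpiece i
    _ = Fintype.card ι * #S := by rw [sum_const, card_univ, smul_eq_mul]

theorem greedy_matroid_intersection_bound_general
    {α : Type*} [DecidableEq α]
    (P : ℕ)
    (M : Fin P → Matroid α)
    (f : Finset α → ℝ)
    (hmono : ∀ A B : Finset α, A ⊆ B → f A ≤ f B)
    (hsub : ∀ A B : Finset α, A ⊆ B → ∀ x ∉ B,
      f (insert x B) - f B ≤ f (insert x A) - f A)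
    (F : Finset α → Prop)
    (hF : ∀ A : Finset α, F A ↔ ∀ p, (M p).Indep (↑A : Set α))
    (K : ℕ) (s : ℕ → α)
    (Sk : ℕ → Finset α) (hSk : ∀ k, Sk k = (Finset.range k).image s)
    (hSF : F (Sk K))
    (hgreedy : ∀ k, 1 ≤ k → k ≤ K → ∀ j ∉ Sk (k - 1),
      F (insert j (Sk (k - 1))) →
      f (insert j (Sk (k - 1))) - f (Sk (k - 1)) ≤ f (Sk k) - f (Sk (k - 1)))
    (hmax : ∀ j ∉ Sk K, ¬ F (insert j (Sk K)))
    (T : Finset α) (hT : F T) :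
    f T - f (Sk K) ≤ P * (f (Sk K) - f ∅) := by
  have hdown : ∀ ⦃A B : Finset α⦄, A ⊆ B → F B → F A := fun A B hAB hB =>
    (hF A).2 fun p => ((hF B).1 hB p).subset (coe_subset.2 hAB)
  have hsucc : ∀ k, Sk (k + 1) = insert (s k) (Sk k) := fun k => by
    rw [hSk, hSk, range_add_one, image_insert]
  have hzero : Sk 0 = ∅ := by rw [hSk, range_zero, image_empty]
  have hblocked : ∀ k ≤ K, ∀ B ⊆ T, (∀ j ∈ B, ¬ F (insert j (Sk k))) → #B ≤ P * k := by
    intro k hk B hBT hB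
    have hSkF := hdown (monotone_of_forall_eq_insert hsucc hk) hSF
    calc #B ≤ Fintype.card (Fin P) * #(Sk k) :=
          card_le_mul_card_of_not_indep_insert M ((hF _).1 hSkF) ((hF _).1 (hdown hBT hT))
            fun j hj => (hF _).not.1 (hB j hj)
      _ ≤ P * k := by
          rw [Fintype.card_fin, hSk]
          exact Nat.mul_le_mul_left P (card_image_le.trans (card_range k).le)
  have hgreedy' : ∀ k < K, ∀ j ∉ Sk k, F (insert j (Sk k)) →
      f (insert j (Sk k)) - f (Sk k) ≤ f (Sk (k + 1)) - f (Sk k) := fun k hk => by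
    simpa using hgreedy (k + 1) (by omega) hk
  exact greedy_sub_le_mul_of_card_blocked_le P (fun A B => hmono A B) hsub hdown hzero hsucc hSF
    hgreedy' hmax hT hblocked

/-- Greedy approximation bound for maximizing a nondecreasing submodular
function over the intersection of `P` matroids: if `S = Sk K` is a maximal
member of the family `F` of common independent sets produced greedily, then
for every `T ∈ F`, `f T - f S ≤ P * (f S - f ∅)`. -/
theorem greedy_matroid_intersection_bound
    {α : Type*} [Fintype α] [DecidableEq α]
    (P : ℕ) (hP : 1 ≤ P)
    (M : Fin P → Matroid α) (hME : ∀ p, (M p).E = Set.univ)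
    (f : Finset α → ℝ)
    (hmono : ∀ A B : Finset α, A ⊆ B → f A ≤ f B)
    (hsub : ∀ A B : Finset α, A ⊆ B → ∀ x ∉ B,
      f (insert x B) - f B ≤ f (insert x A) - f A)
    (F : Finset α → Prop)
    (hF : ∀ A : Finset α, F A ↔ ∀ p, (M p).Indep (↑A : Set α))
    (K : ℕ) (s : ℕ → α) (hinj : Set.InjOn s (Set.Iio K))
    (Sk : ℕ → Finset α) (hSk : ∀ k, Sk k = (Finset.range k).image s)
    (hSF : F (Sk K))
    (hgreedy : ∀ k, 1 ≤ k → k ≤ K → ∀ j ∉ Sk (k - 1),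
      F (insert j (Sk (k - 1))) →
      f (insert j (Sk (k - 1))) - f (Sk (k - 1)) ≤ f (Sk k) - f (Sk (k - 1)))
    (hmax : ∀ j ∉ Sk K, ¬ F (insert j (Sk K)))
    (T : Finset α) (hT : F T) :
    f T - f (Sk K) ≤ P * (f (Sk K) - f ∅) :=
  greedy_matroid_intersection_bound_general P M f hmono hsub F hF K s Sk hSk hSF hgreedy hmax T hT
end

section
/- Let X be a finite set, P ≥ 1 a natural number, and f a nondecreasing submodular function on subsets of X. Let ∅ = S_0 ⊂ S_1 ⊂ ⋯ ⊂ S_K be a chain with S_k = S_{k-1} ∪ {s_k} for distinct elements s_k, and set ρ_{k-1} = f(S_k) − f(S_{k-1}); assume ρ_0 ≥ ρ_1 ≥ ⋯ ≥ ρ_{K-1}. Let ∅ = U_0 ⊆ U_1 ⊆ ⋯ ⊆ U_K be sets and T ⊆ U_K a subset such that: (i) for every k ∈ {1, …, K} and every j ∈ U_k \ U_{k-1}, f(S_K ∪ {j}) − f(S_K) ≤ ρ_{k-1}; and (ii) |T ∩ U_k| ≤ P·k for every k = 1, …, K. Then f(T) ≤ f(S_K) + P · ( f(S_K) − f(∅)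 ). -/
/-- Combination of steps (a) and (b) with Proposition 2 in the proof of
Proposition 3: under the greedy-gain hypothesis (i) and the span counting
hypothesis (ii), `f T ≤ f (Sk K) + P * (f (Sk K) - f ∅)`. -/
theorem greedy_value_bound
    {α : Type*} [Fintype α] [DecidableEq α]
    (P : ℕ) (hP : 1 ≤ P)
    (f : Finset α → ℝ)
    (hmono : ∀ A B : Finset α, A ⊆ B → f A ≤ f B)
    (hsub : ∀ A B : Finset α, A ⊆ B → ∀ x ∉ B,
      f (insert x B) - f B ≤ f (insert x A) - f A)
    (K : ℕ) (s : ℕ → α) (hinj : Set.InjOn s (Set.Iio K))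
    (Sk : ℕ → Finset α) (hSk : ∀ k, Sk k = (Finset.range k).image s)
    (ρ : ℕ → ℝ) (hρ : ∀ k, ρ k = f (Sk (k + 1)) - f (Sk k))
    (hρmono : ∀ k, k + 1 < K → ρ (k + 1) ≤ ρ k)
    (U : ℕ → Finset α) (hU0 : U 0 = ∅)
    (hUmono : ∀ k, k < K → U k ⊆ U (k + 1))
    (T : Finset α) (hTU : T ⊆ U K)
    (hi : ∀ k, 1 ≤ k → k ≤ K → ∀ j ∈ U k \ U (k - 1),
      f (insert j (Sk K)) - f (Sk K) ≤ ρ (k - 1))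
    (hii : ∀ k, 1 ≤ k → k ≤ K → (T ∩ U k).card ≤ P * k) :
    f T ≤ f (Sk K) + P * (f (Sk K) - f ∅) := by
  classical
  have hSk0 : Sk 0 = ∅ := by rw [hSk]; simp
  rcases Nat.eq_zero_or_pos K with hK0 | hKpos
  · subst hK0
    have hT : T = ∅ := Finset.subset_empty.mp (hU0 ▸ hTU)
    subst hT
    rw [hSk0]
    nlinarith [le_refl (f (∅ : Finset α))]
  -- basic facts
  have hSsub : ∀ k, Sk k ⊆ Sk (k + 1) := by
    intro k
    rw [hSk, hSk]
    exact Finset.image_subset_image (Finset.range_subset_range.mpr (Nat.le_succ k))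
  have hρnonneg : ∀ k, 0 ≤ ρ k := by
    intro k
    rw [hρ]
    have := hmono _ _ (hSsub k)
    linarith
  have hsumρ : ∑ k ∈ Finset.range K, ρ k = f (Sk K) - f ∅ := by
    have : ∑ k ∈ Finset.range K, ρ k
        = ∑ k ∈ Finset.range K, (f (Sk (k + 1)) - f (Sk k)) :=
      Finset.sum_congr rfl fun k _ => hρ k
    rw [this, Finset.sum_range_sub (fun k => f (Sk k)), hSk0]
  -- marginal gains
  set m : α → ℝ := fun j => f (insert j (Sk K)) - f (Sk K) with hm
  have hmnonneg : ∀ j, 0 ≤ m j := by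
    intro j
    have := hmono _ _ (Finset.subset_insert j (Sk K))
    simp only [hm]
    linarith
  -- submodular sum bound
  have subadd : ∀ A : Finset α, f (Sk K ∪ A) ≤ f (Sk K) + ∑ j ∈ A, m j := by
    intro A
    induction A using Finset.induction_on with
    | empty => simp
    | @insert a A' ha ih =>
      rw [Finset.sum_insert ha, Finset.union_insert]
      by_cases hmem : a ∈ Sk K ∪ A'
      · rw [Finset.insert_eq_self.mpr hmem]
        have := hmnonneg a
        linarith
      · have h := hsub (Sk K) (Sk K ∪ A') Finset.subset_union_left a hmem
        have : f (insert a (Sk K ∪ A')) - f (Sk K ∪ A') ≤ m a := h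
        linarith
  have h1 : f T ≤ f (Sk K ∪ T) := hmono _ _ Finset.subset_union_right
  have h2 : f (Sk K ∪ T) ≤ f (Sk K) + ∑ j ∈ T, m j := subadd T
  -- decompose the sum over shells
  set t : ℕ → ℝ := fun k => ((T ∩ U k).card : ℝ) with ht
  set g : ℕ → ℝ := fun k => ∑ j ∈ T ∩ U k, m j with hg
  have ht0 : t 0 = 0 := by simp [ht, hU0]
  have hg0 : g 0 = 0 := by simp [hg, hU0]
  have hgK : g K = ∑ j ∈ T, m j := by
    simp [hg, Finset.inter_eq_left.mpr hTU]
  have hshell : ∀ k ∈ Finset.range K, g (k + 1) - g k ≤ (t (k + 1) - t k) * ρ k := by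
    intro k hk
    rw [Finset.mem_range] at hk
    have hsubk : T ∩ U k ⊆ T ∩ U (k + 1) :=
      Finset.inter_subset_inter (le_refl T) (hUmono k hk)
    have hdiff : g (k + 1) - g k = ∑ j ∈ (T ∩ U (k + 1)) \ (T ∩ U k), m j :=
      (Finset.sum_sdiff_eq_sub hsubk).symm
    have hbound : ∀ j ∈ (T ∩ U (k + 1)) \ (T ∩ U k), m j ≤ ρ k := by
      intro j hj
      rw [Finset.mem_sdiff, Finset.mem_inter] at hj
      obtain ⟨⟨hjT, hjU⟩, hjnot⟩ := hj
      have hjUk : j ∉ U k := fun h => hjnot (Finset.mem_inter.mpr ⟨hjT, h⟩)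
      have := hi (k + 1) (Nat.le_add_left 1 k) hk j
        (by simp only [Nat.add_sub_cancel]; exact Finset.mem_sdiff.mpr ⟨hjU, hjUk⟩)
      simp only [Nat.add_sub_cancel] at this
      exact this
    have hsum := Finset.sum_le_card_nsmul _ m (ρ k) hbound
    rw [Finset.card_sdiff_of_subset hsubk, nsmul_eq_mul] at hsum
    have hcard : ((T ∩ U (k + 1)).card - (T ∩ U k).card : ℕ) = (t (k + 1) - t k : ℝ) → True := fun _ => trivial
    have hcast : (((T ∩ U (k + 1)).card - (T ∩ U k).card : ℕ) : ℝ) = t (k + 1) - t k := by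
      rw [Nat.cast_sub (Finset.card_le_card hsubk)]
    rw [hcast] at hsum
    rw [hdiff]
    exact hsum
  have htele : ∑ k ∈ Finset.range K, (g (k + 1) - g k) = g K - g 0 :=
    Finset.sum_range_sub g K
  have h3 : ∑ j ∈ T, m j ≤ ∑ k ∈ Finset.range K, (t (k + 1) - t k) * ρ k := by
    have := Finset.sum_le_sum hshell
    rw [htele, hgK, hg0] at this
    linarith
  -- main Abel-summation induction
  have claim : ∀ n, n ≤ K →
      ∑ k ∈ Finset.range n, (t (k + 1) - t k) * ρ k ≤
        (P : ℝ) * ∑ k ∈ Finset.range n, ρ k - ((P : ℝ) * n - t n) * ρ (n - 1) := by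
    intro n
    induction n with
    | zero => intro _; simp [ht0]
    | succ n ih =>
      intro hn
      have ihn := ih (Nat.le_of_succ_le hn)
      rw [Finset.sum_range_succ, Finset.sum_range_succ]
      have hidx : (n + 1) - 1 = n := by omega
      rw [hidx]
      rcases Nat.eq_zero_or_pos n with h0 | hpos
      · subst h0
        simp only [Finset.range_zero, Finset.sum_empty] at *
        rw [ht0] at *
        push_cast
        nlinarith [hρnonneg 0]
      · have hnK : n < K := Nat.lt_of_succ_le hn
        have hB : ρ n ≤ ρ (n - 1) := by
          have := hρmono (n - 1) (by omega : (n - 1) + 1 < K)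
          rwa [show n - 1 + 1 = n from by omega] at this
        have hA : t n ≤ (P : ℝ) * n := by
          have := hii n hpos (Nat.le_of_lt hnK)
          calc t n = ((T ∩ U n).card : ℝ) := rfl
            _ ≤ ((P * n : ℕ) : ℝ) := by exact_mod_cast this
            _ = (P : ℝ) * n := by push_cast; ring
        have hmul : ((P : ℝ) * n - t n) * ρ n ≤ ((P : ℝ) * n - t n) * ρ (n - 1) :=
          mul_le_mul_of_nonneg_left hB (by linarith)
        push_cast
        nlinarith [hmul, ihn]
  have h5 := claim K le_rfl
  have hKcard : t K ≤ (P : ℝ) * K := by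
    have := hii K hKpos le_rfl
    calc t K = ((T ∩ U K).card : ℝ) := rfl
      _ ≤ ((P * K : ℕ) : ℝ) := by exact_mod_cast this
      _ = (P : ℝ) * K := by push_cast; ring
  have h6 : 0 ≤ ((P : ℝ) * K - t K) * ρ (K - 1) :=
    mul_nonneg (by linarith) (hρnonneg (K - 1))
  rw [hsumρ] at h5
  linarith
end

section
/- Let P ≥ 1 be an integer, X = {1, 2, …, P+2}, and define g on subsets of X by g(A) = |A| − 1 if both 1 ∈ A and P+2 ∈ A, and g(A) = |A| otherwise. Let 𝓕 be the family of all A ⊆ X such that for every j ∈ {2, …, P+2}, not both 1 ∈ A and j ∈ A (equivalently, if 1 ∈ A then A = {1} or A = ∅ ∪ {1}). Then the maximum of g over 𝓕 equals P+1, attained by the set {2, 3, …, P+2}; moreover {1} ∈ 𝓕 is a maximal member of 𝓕 (no proper superset in 𝓕) with g({1}) = 1, so that (max_{A ∈ 𝓕} g(A) − g({1})) / (max_{A ∈ 𝓕} g(A) − g(∅)) = P/(P+1). -/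
/-! A feasible set containing `1` can contain nothing else, so it is `{1}` or `∅`; a feasible set
avoiding `1` lies in `{2, …, P+2}`. Either way `g A ≤ |A| ≤ P + 1`, with equality at
`{2, …, P+2}`, while `{1}` is maximal with value `1` and `g ∅ = 0`. -/

open Finset

lemma subset_singleton_or_subset_Icc_two {n : ℕ} {A : Finset ℕ} (hA : A ⊆ Icc 1 n)
    (hconflict : ∀ j, 2 ≤ j → j ≤ n → ¬(1 ∈ A ∧ j ∈ A)) :
    A ⊆ {1} ∨ A ⊆ Icc 2 n := by
  by_cases h1 : 1 ∈ A
  · left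
    intro a ha
    by_contra hne
    have ha' := mem_Icc.1 (hA ha)
    have hne : a ≠ 1 := by simpa using hne
    exact hconflict a (by omega) ha'.2 ⟨h1, ha⟩
  · right
    intro a ha
    have ha' := mem_Icc.1 (hA ha)
    have hne : a ≠ 1 := by rintro rfl; exact h1 ha
    exact mem_Icc.2 ⟨by omega, ha'.2⟩

theorem tightness_example_general
    (P : ℕ)
    (X : Finset ℕ) (hX : X = Finset.Icc 1 (P + 2))
    (g : Finset ℕ → ℝ)
    (hg : ∀ A : Finset ℕ,
      g A = if 1 ∈ A ∧ P + 2 ∈ A then (A.card : ℝ) - 1 else (A.card : ℝ))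
    (F : Finset ℕ → Prop)
    (hF : ∀ A : Finset ℕ,
      F A ↔ A ⊆ X ∧ ∀ j, 2 ≤ j → j ≤ P + 2 → ¬(1 ∈ A ∧ j ∈ A)) :
    F (Finset.Icc 2 (P + 2)) ∧
    g (Finset.Icc 2 (P + 2)) = (P : ℝ) + 1 ∧
    (∀ A, F A → g A ≤ (P : ℝ) + 1) ∧
    F {1} ∧
    (∀ B, F B → ({1} : Finset ℕ) ⊆ B → B = {1}) ∧
    g {1} = 1 ∧
    (((P : ℝ) + 1) - g {1}) / (((P : ℝ) + 1) - g ∅) = (P : ℝ) / ((P : ℝ) + 1) := by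
  subst hX
  have hF_cases : ∀ A, F A → A ⊆ {1} ∨ A ⊆ Icc 2 (P + 2) := fun A hA =>
    subset_singleton_or_subset_Icc_two ((hF A).1 hA).1 ((hF A).1 hA).2
  have hg_le : ∀ A, g A ≤ A.card := fun A => by rw [hg]; split_ifs <;> linarith
  have hg_eq : ∀ A, ¬(1 ∈ A ∧ P + 2 ∈ A) → g A = A.card := fun A h => by rw [hg, if_neg h]
  have hg_one : g {1} = 1 := by rw [hg_eq _ (by simp)]; simp
  have hg_empty : g ∅ = 0 := by rw [hg_eq _ (by simp)]; simp
  refine ⟨?_, ?_, ?_, ?_, ?_, hg_one, ?_⟩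
  · refine (hF _).2 ⟨Icc_subset_Icc (by omega) le_rfl, fun j _ _ h => ?_⟩
    simp at h
  · rw [hg_eq _ (by simp), Nat.card_Icc]
    push_cast
    ring
  · intro A hA
    have hcard : A.card ≤ P + 1 := by
      rcases hF_cases A hA with hA1 | hA2
      · exact (card_le_card hA1).trans (by simp)
      · simpa using card_le_card hA2
    exact (hg_le A).trans (by exact_mod_cast hcard)
  · refine (hF _).2 ⟨by simp, fun j hj _ h => ?_⟩
    simp at h
    omega
  · intro B hB h1B
    rcases hF_cases B hB with hB1 | hB2
    · exact hB1.antisymm h1B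
    · simpa using hB2 (h1B (mem_singleton_self 1))
  · rw [hg_one, hg_empty]
    field_simp
    ring

/-- Tightness of the `P/(P+1)` bound: over the family `F` of subsets of
`X = {1, …, P+2}` containing at most one of `1` and any `j ∈ {2, …, P+2}`,
the maximum of `g` is `P+1`, attained at `{2, …, P+2}`; the set `{1}` is a
maximal member of `F` with `g {1} = 1`, so the gap ratio equals `P/(P+1)`. -/
theorem tightness_example
    (P : ℕ) (hP : 1 ≤ P)
    (X : Finset ℕ) (hX : X = Finset.Icc 1 (P + 2))
    (g : Finset ℕ → ℝ)
    (hg : ∀ A : Finset ℕ,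
      g A = if 1 ∈ A ∧ P + 2 ∈ A then (A.card : ℝ) - 1 else (A.card : ℝ))
    (F : Finset ℕ → Prop)
    (hF : ∀ A : Finset ℕ,
      F A ↔ A ⊆ X ∧ ∀ j, 2 ≤ j → j ≤ P + 2 → ¬(1 ∈ A ∧ j ∈ A)) :
    F (Finset.Icc 2 (P + 2)) ∧
    g (Finset.Icc 2 (P + 2)) = (P : ℝ) + 1 ∧
    (∀ A, F A → g A ≤ (P : ℝ) + 1) ∧
    F {1} ∧
    (∀ B, F B → ({1} : Finset ℕ) ⊆ B → B = {1}) ∧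
    g {1} = 1 ∧
    (((P : ℝ) + 1) - g {1}) / (((P : ℝ) + 1) - g ∅) = (P : ℝ) / ((P : ℝ) + 1) :=
  tightness_example_general P X hX g hg F hF
end
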